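/- arXiv:1401.1000 — 2 statements merged into one kernel-verified Lean document; each statement's English description precedes it below -/
import Mathlib

section
/- Consider the Jacobi system dξ/dt = 1 + ξ², dθ/dt = −1 − ξ − θ + ξθ, and let F(ξ,θ) = ((1 + ξ²)/(ξ + θ)²)·exp(−2·arctan ξ) on the set G = {(ξ,θ) : ξ + θ ≠ 0}. Then F is differentiable on G and (1 + ξ²)·∂F/∂ξ(ξ,θ) + (−1 − ξ − θ + ξθ)·∂F/∂θ(ξ,θ) = 0 for all (ξ,θ) ∈ G; that is, F is a general autonomous integral of the system on any domain contained in G. -/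
/-!
Write `F(ξ,θ) = g(ξ)/(ξ + θ)²` with `g(ξ) = (1 + ξ²)·exp(−2·arctan ξ)`, so that
`g'(ξ) = 2(ξ − 1)·exp(−2·arctan ξ)`. Along the Jacobi vector field `V` we have
`V(ξ + θ) = (ξ − 1)(ξ + θ)` and `V g = (1 + ξ²) g' = 2(ξ − 1) g`, so the logarithmic derivatives of
`g` and of `(ξ + θ)²` agree and `V F = 0`.
-/

/-- `F(ξ,θ) = ((1 + ξ²)/(ξ + θ)²)·exp(−2·arctan ξ)`. -/
noncomputable def F5 : ℝ × ℝ → ℝ :=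
  fun p => ((1 + p.1 ^ 2) / (p.1 + p.2) ^ 2) * Real.exp (-2 * Real.arctan p.1)

open Real

theorem hasDerivAt_one_add_sq_mul_exp_neg_two_mul_arctan (x : ℝ) :
    HasDerivAt (fun t => (1 + t ^ 2) * exp (-2 * arctan t))
      (2 * (x - 1) * exp (-2 * arctan x)) x := by
  have h : HasDerivAt (fun t => (1 + t ^ 2) * exp (-2 * arctan t)) _ x :=
    ((hasDerivAt_pow 2 x).const_add 1).mul ((hasDerivAt_arctan x).const_mul (-2)).exp
  convert h using 1
  field_simp
  ring

theorem hasFDerivAt_comp_fst_div_sq_add {g : ℝ → ℝ} {g' : ℝ} {p : ℝ × ℝ}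
    (hg : HasDerivAt g g' p.1) (hp : p.1 + p.2 ≠ 0) :
    HasFDerivAt (fun q : ℝ × ℝ => g q.1 / (q.1 + q.2) ^ 2)
      ((g' / (p.1 + p.2) ^ 2) • ContinuousLinearMap.fst ℝ ℝ ℝ -
        (2 * g p.1 / (p.1 + p.2) ^ 3) •
          (ContinuousLinearMap.fst ℝ ℝ ℝ + ContinuousLinearMap.snd ℝ ℝ ℝ)) p := by
  have hfst : HasFDerivAt (fun q : ℝ × ℝ => q.1) (ContinuousLinearMap.fst ℝ ℝ ℝ) p :=
    hasFDerivAt_fst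
  have hsum : HasFDerivAt (fun q : ℝ × ℝ => q.1 + q.2)
      (ContinuousLinearMap.fst ℝ ℝ ℝ + ContinuousLinearMap.snd ℝ ℝ ℝ) p :=
    hasFDerivAt_fst.add hasFDerivAt_snd
  have hinv : HasFDerivAt (fun q : ℝ × ℝ => ((q.1 + q.2) ^ 2)⁻¹) _ p :=
    (hasDerivAt_inv (pow_ne_zero 2 hp)).comp_hasFDerivAt p (hsum.pow 2)
  have hmul : HasFDerivAt (fun q : ℝ × ℝ => g q.1 * ((q.1 + q.2) ^ 2)⁻¹) _ p :=
    (hg.comp_hasFDerivAt p hfst).mul hinv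
  simp only [← div_eq_mul_inv] at hmul
  refine hmul.congr_fderiv ?_
  ext <;> simp [field]
  ring

theorem F5_eq_div_sq_add :
    F5 = fun q : ℝ × ℝ => (1 + q.1 ^ 2) * exp (-2 * arctan q.1) / (q.1 + q.2) ^ 2 := by
  funext q
  exact div_mul_eq_mul_div _ _ _

/-- `F` is a general autonomous integral of the Jacobi system
`dξ/dt = 1 + ξ²`, `dθ/dt = −1 − ξ − θ + ξθ` on `G = {(ξ,θ) : ξ + θ ≠ 0}`. -/
theorem F5_general_autonomous_integral :
    ∀ p : ℝ × ℝ, p.1 + p.2 ≠ 0 →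
      DifferentiableAt ℝ F5 p ∧
      (1 + p.1 ^ 2) * fderiv ℝ F5 p (1, 0) +
        (-1 - p.1 - p.2 + p.1 * p.2) * fderiv ℝ F5 p (0, 1) = 0 := by
  rintro ⟨x, y⟩ hxy
  have hF := hasFDerivAt_comp_fst_div_sq_add
    (hasDerivAt_one_add_sq_mul_exp_neg_two_mul_arctan x) hxy
  rw [← F5_eq_div_sq_add] at hF
  refine ⟨hF.differentiableAt, ?_⟩
  have hflow : (1 + x ^ 2) + (-1 - x - y + x * y) = (x - 1) * (x + y) := by ring
  rw [hF.fderiv]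
  simp only [sub_apply, add_apply, smul_apply,
    ContinuousLinearMap.coe_fst', ContinuousLinearMap.coe_snd',
    smul_eq_mul, mul_one, mul_zero, add_zero, zero_add]
  field_simp
  linear_combination -2 * (1 + x ^ 2) * exp (-(2 * arctan x)) * hflow
end

section
/- Consider the Darboux system dx/dt = −y + x³, dy/dt = x(1 + xy), and set F₁(t,x,y) = −t + arctan(y/x) and F₂(t,x,y) = t + (1 + xy)/(x² + y²) on the set D = {(t,x,y) : x ≠ 0}. Then F₁ and F₂ are differentiable on D and satisfy ∂Fᵢ/∂t(t,x,y) + (−y + x³)·∂Fᵢ/∂x(t,x,y) + x(1 + xy)·∂Fᵢ/∂y(t,x,y) = 0 for all (t,x,y) ∈ D and i = 1, 2; that is, F₁ and F₂ are first integrals of the system on any domain contained in D. -/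
/-!
Write `F₁ = -t + θ` and `F₂ = t + ψ` with `θ = arctan (y / x)` and `ψ = N / D`, where
`N = 1 + x y` and `D = x² + y²`. Along the planar field `(-y + x³, x (1 + x y))` one has
`x ẏ - y ẋ = D`, so `θ̇ = 1`; and `D` is a Darboux polynomial with cofactor `2 x²`
(`Ḋ = 2 x² D`) while `Ṅ = 2 x² N - D`, so `ψ̇ = -1`. These rates cancel the time terms.
-/

/-- `F₁(t,x,y) = −t + arctan(y/x)`. -/
noncomputable def F13₁ : ℝ × ℝ × ℝ → ℝ :=
  fun p => -p.1 + Real.arctan (p.2.2 / p.2.1)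

/-- `F₂(t,x,y) = t + (1 + xy)/(x² + y²)`. -/
noncomputable def F13₂ : ℝ × ℝ × ℝ → ℝ :=
  fun p => p.1 + (1 + p.2.1 * p.2.2) / (p.2.1 ^ 2 + p.2.2 ^ 2)

open ContinuousLinearMap Real

theorem HasDerivAt.hasFDerivAt_fst_add_snd {E : Type*} [NormedAddCommGroup E] [NormedSpace ℝ E]
    {f : ℝ → ℝ} {φ : E → ℝ} {f' : ℝ} {p : ℝ × E}
    (hf : HasDerivAt f f' p.1) (hφ : DifferentiableAt ℝ φ p.2) :
    HasFDerivAt (fun p : ℝ × E => f p.1 + φ p.2)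
      (f' • fst ℝ ℝ E + (fderiv ℝ φ p.2).comp (snd ℝ ℝ E)) p :=
  ((hf.hasFDerivAt.comp p hasFDerivAt_fst).add
    (hφ.hasFDerivAt.comp p hasFDerivAt_snd)).congr_fderiv <| by ext <;> simp

theorem ContinuousLinearMap.map_one_add_mul_add_mul (L : ℝ × ℝ × ℝ →L[ℝ] ℝ) (v : ℝ × ℝ) :
    L (1, 0, 0) + v.1 * L (0, 1, 0) + v.2 * L (0, 0, 1) = L (1, v) := by
  have : ((1 : ℝ), v) = (1, 0, 0) + v.1 • (0, 1, 0) + v.2 • (0, 0, 1) := by simp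
  rw [this, map_add, map_add, map_smul, map_smul, smul_eq_mul, smul_eq_mul]

theorem hasFDerivAt_arctan_div {q : ℝ × ℝ} (hq : q.1 ≠ 0) :
    HasFDerivAt (fun q : ℝ × ℝ => arctan (q.2 / q.1))
      ((-q.2 / (q.1 ^ 2 + q.2 ^ 2)) • fst ℝ ℝ ℝ + (q.1 / (q.1 ^ 2 + q.2 ^ 2)) • snd ℝ ℝ ℝ) q := by
  have hinv : HasFDerivAt (fun q : ℝ × ℝ => q.1⁻¹) _ q :=
    (hasDerivAt_inv hq).comp_hasFDerivAt q (hasFDerivAt_fst (𝕜 := ℝ))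
  have hdiv := (hasFDerivAt_snd (𝕜 := ℝ) (p := q)).fun_mul hinv
  simp only [← div_eq_mul_inv] at hdiv
  refine hdiv.arctan.congr_fderiv ?_
  have : q.1 ^ 2 + q.2 ^ 2 ≠ 0 := by positivity
  refine ContinuousLinearMap.ext fun v => ?_
  simp only [add_apply, smul_apply, coe_fst', coe_snd', smul_eq_mul]
  field_simp

theorem hasFDerivAt_one_add_mul_div_sq_add_sq {q : ℝ × ℝ} (hq : q.1 ^ 2 + q.2 ^ 2 ≠ 0) :
    HasFDerivAt (fun q : ℝ × ℝ => (1 + q.1 * q.2) / (q.1 ^ 2 + q.2 ^ 2))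
      (((q.2 * (q.1 ^ 2 + q.2 ^ 2) - 2 * q.1 * (1 + q.1 * q.2)) / (q.1 ^ 2 + q.2 ^ 2) ^ 2) •
          fst ℝ ℝ ℝ +
        ((q.1 * (q.1 ^ 2 + q.2 ^ 2) - 2 * q.2 * (1 + q.1 * q.2)) / (q.1 ^ 2 + q.2 ^ 2) ^ 2) •
          snd ℝ ℝ ℝ) q := by
  have hnum : HasFDerivAt (fun q : ℝ × ℝ => 1 + q.1 * q.2) _ q :=
    (hasFDerivAt_const 1 q).add ((hasFDerivAt_fst (𝕜 := ℝ)).mul (hasFDerivAt_snd (𝕜 := ℝ)))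
  have hden : HasFDerivAt (fun q : ℝ × ℝ => q.1 ^ 2 + q.2 ^ 2) _ q :=
    ((hasFDerivAt_fst (𝕜 := ℝ)).pow 2).add ((hasFDerivAt_snd (𝕜 := ℝ)).pow 2)
  have hquot := hnum.fun_mul ((hasDerivAt_inv hq).comp_hasFDerivAt q hden)
  simp only [Function.comp_def, ← div_eq_mul_inv] at hquot
  refine hquot.congr_fderiv ?_
  refine ContinuousLinearMap.ext fun v => ?_
  simp only [add_apply, smul_apply, coe_fst', coe_snd', zero_apply, smul_eq_mul, nsmul_eq_mul]
  field_simp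
  ring

def darbouxField (q : ℝ × ℝ) : ℝ × ℝ :=
  (-q.2 + q.1 ^ 3, q.1 * (1 + q.1 * q.2))

theorem fderiv_arctan_div_darbouxField {q : ℝ × ℝ} (hq : q.1 ≠ 0) :
    fderiv ℝ (fun q : ℝ × ℝ => arctan (q.2 / q.1)) q (darbouxField q) = 1 := by
  have : q.1 ^ 2 + q.2 ^ 2 ≠ 0 := by positivity
  rw [(hasFDerivAt_arctan_div hq).fderiv]
  simp only [darbouxField, add_apply, smul_apply, coe_fst', coe_snd', smul_eq_mul]
  field_simp
  ring

theorem fderiv_one_add_mul_div_sq_add_sq_darbouxField {q : ℝ × ℝ} (hq : q.1 ^ 2 + q.2 ^ 2 ≠ 0) :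
    fderiv ℝ (fun q : ℝ × ℝ => (1 + q.1 * q.2) / (q.1 ^ 2 + q.2 ^ 2)) q (darbouxField q) = -1 := by
  rw [(hasFDerivAt_one_add_mul_div_sq_add_sq hq).fderiv]
  simp only [darbouxField, add_apply, smul_apply, coe_fst', coe_snd', smul_eq_mul]
  field_simp
  ring

/-- `F₁` and `F₂` are first integrals of the Darboux system
`dx/dt = −y + x³`, `dy/dt = x(1 + xy)` on `D = {(t,x,y) : x ≠ 0}`. -/
theorem F13_first_integrals :
    ∀ p : ℝ × ℝ × ℝ, p.2.1 ≠ 0 →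
      DifferentiableAt ℝ F13₁ p ∧ DifferentiableAt ℝ F13₂ p ∧
      fderiv ℝ F13₁ p (1, 0, 0) +
        (-p.2.2 + p.2.1 ^ 3) * fderiv ℝ F13₁ p (0, 1, 0) +
        p.2.1 * (1 + p.2.1 * p.2.2) * fderiv ℝ F13₁ p (0, 0, 1) = 0 ∧
      fderiv ℝ F13₂ p (1, 0, 0) +
        (-p.2.2 + p.2.1 ^ 3) * fderiv ℝ F13₂ p (0, 1, 0) +
        p.2.1 * (1 + p.2.1 * p.2.2) * fderiv ℝ F13₂ p (0, 0, 1) = 0 := by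
  rintro ⟨t, x, y⟩ (hx : x ≠ 0)
  have hr : x ^ 2 + y ^ 2 ≠ 0 := by positivity
  have h₁ : HasFDerivAt F13₁ _ (t, x, y) :=
    (hasDerivAt_neg' t).hasFDerivAt_fst_add_snd (hasFDerivAt_arctan_div hx).differentiableAt
  have h₂ : HasFDerivAt F13₂ _ (t, x, y) :=
    (hasDerivAt_id t).hasFDerivAt_fst_add_snd (p := (t, x, y))
      (hasFDerivAt_one_add_mul_div_sq_add_sq hr).differentiableAt
  refine ⟨h₁.differentiableAt, h₂.differentiableAt, ?_, ?_⟩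
  · refine ((fderiv ℝ F13₁ _).map_one_add_mul_add_mul (darbouxField (x, y))).trans ?_
    simp [h₁.fderiv, fderiv_arctan_div_darbouxField (q := (x, y)) hx]
  · refine ((fderiv ℝ F13₂ _).map_one_add_mul_add_mul (darbouxField (x, y))).trans ?_
    simp [h₂.fderiv, fderiv_one_add_mul_div_sq_add_sq_darbouxField (q := (x, y)) hr]
end
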